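/- arXiv:1710.00602 — 14 statements merged into one kernel-verified Lean document; each statement's English description precedes it below -/
import Mathlib

section
/- For every integer n ≥ 0, JO_{n+2} + JO_{n+1} + JO_n = 2^{n+1}·α, where α = Σ_{s=0}^{7} 2^s e_s. -/
open Quaternion

noncomputable section

/-- The octonions, built from pairs of quaternions via the Cayley–Dickson construction. -/
def Octonion : Type := ℍ[ℝ] × ℍ[ℝ]

namespace Octonion

instance : AddCommGroup Octonion := inferInstanceAs (AddCommGroup (ℍ[ℝ] × ℍ[ℝ]))
instance : Module ℝ Octonion := inferInstanceAs (Module ℝ (ℍ[ℝ] × ℍ[ℝ]))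

instance : One Octonion := ⟨((1, 0) : ℍ[ℝ] × ℍ[ℝ])⟩

/-- Cayley–Dickson multiplication `(a,b)·(c,d) = (ac - d̄b, da + bc̄)`; this realizes the
standard octonion multiplication table (`e₁e₂ = e₃`, `e₁e₄ = e₅`, `e₂e₄ = e₆`,
`e₃e₄ = e₇`, `eₛ² = -1` for `1 ≤ s ≤ 7`, …). -/
instance : Mul Octonion :=
  ⟨fun p q =>
    ((p : ℍ[ℝ] × ℍ[ℝ]).1 * (q : ℍ[ℝ] × ℍ[ℝ]).1
        - star (q : ℍ[ℝ] × ℍ[ℝ]).2 * (p : ℍ[ℝ] × ℍ[ℝ]).2,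
      (q : ℍ[ℝ] × ℍ[ℝ]).2 * (p : ℍ[ℝ] × ℍ[ℝ]).1
        + (p : ℍ[ℝ] × ℍ[ℝ]).2 * star (q : ℍ[ℝ] × ℍ[ℝ]).1)⟩

/-- The standard basis `e₀ = 1, e₁, …, e₇` of the octonions. -/
def e : Fin 8 → Octonion :=
  ![((1, 0) : ℍ[ℝ] × ℍ[ℝ]),
    ((⟨0, 1, 0, 0⟩, 0) : ℍ[ℝ] × ℍ[ℝ]),
    ((⟨0, 0, 1, 0⟩, 0) : ℍ[ℝ] × ℍ[ℝ]),
    ((⟨0, 0, 0, 1⟩, 0) : ℍ[ℝ] × ℍ[ℝ]),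
    ((0, 1) : ℍ[ℝ] × ℍ[ℝ]),
    ((0, ⟨0, 1, 0, 0⟩) : ℍ[ℝ] × ℍ[ℝ]),
    ((0, ⟨0, 0, 1, 0⟩) : ℍ[ℝ] × ℍ[ℝ]),
    ((0, ⟨0, 0, 0, 1⟩) : ℍ[ℝ] × ℍ[ℝ])]

end Octonion

/-- The third order Jacobsthal numbers: `J₀ = 0`, `J₁ = 1`, `J₂ = 1`,
`J_{n+3} = J_{n+2} + J_{n+1} + 2·J_n`. -/
def J3 : ℕ → ℕ
  | 0 => 0
  | 1 => 1
  | 2 => 1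
  | n + 3 => J3 (n + 2) + J3 (n + 1) + 2 * J3 n

/-- The third order Jacobsthal–Lucas numbers: `j₀ = 2`, `j₁ = 1`, `j₂ = 5`,
`j_{n+3} = j_{n+2} + j_{n+1} + 2·j_n`. -/
def j3 : ℕ → ℕ
  | 0 => 2
  | 1 => 1
  | 2 => 5
  | n + 3 => j3 (n + 2) + j3 (n + 1) + 2 * j3 n

/-- The `n`-th third order Jacobsthal octonion `JO_n = ∑_{s=0}^{7} J_{n+s} e_s`. -/
def JO (n : ℕ) : Octonion :=
  ∑ s : Fin 8, (J3 (n + (s : ℕ)) : ℝ) • Octonion.e s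

/-- The `n`-th third order Jacobsthal–Lucas octonion `jO_n = ∑_{s=0}^{7} j_{n+s} e_s`. -/
def jO (n : ℕ) : Octonion :=
  ∑ s : Fin 8, (j3 (n + (s : ℕ)) : ℝ) • Octonion.e s

/-- The octonion `α = ∑_{s=0}^{7} 2^s e_s`. -/
def alphaO : Octonion := ∑ s : Fin 8, ((2 : ℝ) ^ (s : ℕ)) • Octonion.e s


lemma J3_sum (n : ℕ) : J3 (n + 2) + J3 (n + 1) + J3 n = 2 ^ (n + 1) := by
  induction n with
  | zero => rfl
  | succ k ih =>
    calc J3 (k + 3) + J3 (k + 2) + J3 (k + 1)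
        = 2 * (J3 (k + 2) + J3 (k + 1) + J3 k) := by rw [J3]; ring
      _ = 2 * 2 ^ (k + 1) := by rw [ih]
      _ = 2 ^ (k + 1 + 1) := by ring

open Octonion in
theorem JO_sum_three (n : ℕ) :
    JO (n + 2) + JO (n + 1) + JO n = ((2 : ℝ) ^ (n + 1)) • alphaO := by
  unfold JO alphaO
  rw [← Finset.sum_add_distrib, ← Finset.sum_add_distrib, Finset.smul_sum]
  refine Finset.sum_congr rfl fun s _ => ?_
  rw [← add_smul, ← add_smul, smul_smul]
  congr 1
  have h : ((J3 (n + (s:ℕ) + 2) + J3 (n + (s:ℕ) + 1) + J3 (n + (s:ℕ)) : ℕ) : ℝ)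
      = ((2 ^ (n + (s:ℕ) + 1) : ℕ) : ℝ) := by exact_mod_cast J3_sum (n + (s:ℕ))
  push_cast at h
  rw [show n + 2 + (s:ℕ) = n + (s:ℕ) + 2 by ring, show n + 1 + (s:ℕ) = n + (s:ℕ) + 1 by ring,
    h]
  ring

end
end

section
/- For every integer n ≥ 0, JO_{n+2} − 4·JO_n equals: (1 + e_2 + e_3 + e_5 + e_6) − 2(e_1 + e_4 + e_7) if n ≡ 0 (mod 3); (e_1 + e_2 + e_4 + e_5 + e_7) − 2(1 + e_3 + e_6) if n ≡ 1 (mod 3); and (1 + e_1 + e_3 + e_4 + e_6 + e_7) − 2(e_2 + e_5) if n ≡ 2 (mod 3). -/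
open Quaternion

noncomputable section

lemma J3_d_per (n : ℕ) : (J3 (n+5) : ℤ) - 4*J3 (n+3) = (J3 (n+2):ℤ) - 4*J3 n := by
  induction n using Nat.strong_induction_on with
  | _ n ih =>
    match n with
    | 0 => norm_num [J3]
    | 1 => norm_num [J3]
    | 2 => norm_num [J3]
    | m+3 =>
      have h0 := ih m (by omega)
      have h1 := ih (m+1) (by omega)
      have h2 := ih (m+2) (by omega)
      have r1 : J3 (m+8) = J3 (m+7) + J3 (m+6) + 2*J3 (m+5) := rfl
      have r2 : J3 (m+6) = J3 (m+5) + J3 (m+4) + 2*J3 (m+3) := rfl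
      have r3 : J3 (m+5) = J3 (m+4) + J3 (m+3) + 2*J3 (m+2) := rfl
      simp only [show m+1+5 = m+6 from rfl, show m+1+3 = m+4 from rfl, show m+1+2 = m+3 from rfl] at h1
      simp only [show m+2+5 = m+7 from rfl, show m+2+3 = m+5 from rfl, show m+2+2 = m+4 from rfl] at h2
      simp only [show m+3+5 = m+8 from rfl, show m+3+3 = m+6 from rfl, show m+3+2 = m+5 from rfl]
      omega

lemma J3_dmod (n : ℕ) : (J3 (n+2):ℤ) - 4*J3 n = if n % 3 = 1 then -2 else 1 := by
  induction n using Nat.strong_induction_on with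
  | _ n ih =>
    match n with
    | 0 => norm_num [J3]
    | 1 => norm_num [J3]
    | 2 => norm_num [J3]
    | m+3 =>
      have h := ih m (by omega)
      have hm : (m+3) % 3 = m % 3 := by omega
      rw [hm, ← h]
      simpa using J3_d_per m

lemma J3_dmodR (m : ℕ) : (J3 (m+2):ℝ) - 4*(J3 m:ℝ) = if m % 3 = 1 then (-2:ℝ) else 1 := by
  have h := J3_dmod m
  split_ifs with hm <;> simp [hm] at h <;> exact_mod_cast h

open Octonion in
lemma JO_expand (n : ℕ) : JO (n + 2) - (4 : ℝ) • JO n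
    = ∑ s : Fin 8, (((J3 (n + (s:ℕ) + 2) : ℝ) - 4 * (J3 (n + (s:ℕ)) : ℝ))) • e s := by
  unfold JO
  rw [Finset.smul_sum, ← Finset.sum_sub_distrib]
  refine Finset.sum_congr rfl fun s _ => ?_
  have : n + 2 + (s:ℕ) = n + (s:ℕ) + 2 := by omega
  rw [this, smul_smul, ← sub_smul]

open Octonion in
lemma sum_coef_eq (c : ℕ → ℝ) (v : Octonion)
    (hv : c 0 • e 0 + c 1 • e 1 + c 2 • e 2 + c 3 • e 3 + c 4 • e 4 + c 5 • e 5
      + c 6 • e 6 + c 7 • e 7 = v) :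
    ∑ s : Fin 8, c (s:ℕ) • e s = v := by
  rw [Fin.sum_univ_eight]
  simpa only [show ((0:Fin 8):ℕ)=0 from rfl, show ((1:Fin 8):ℕ)=1 from rfl,
    show ((2:Fin 8):ℕ)=2 from rfl, show ((3:Fin 8):ℕ)=3 from rfl,
    show ((4:Fin 8):ℕ)=4 from rfl, show ((5:Fin 8):ℕ)=5 from rfl,
    show ((6:Fin 8):ℕ)=6 from rfl, show ((7:Fin 8):ℕ)=7 from rfl] using hv

open Octonion in
theorem JO_sub_four_JO (n : ℕ) :
    (n % 3 = 0 →
      JO (n + 2) - (4 : ℝ) • JO n =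
        (1 + e 2 + e 3 + e 5 + e 6) - (2 : ℝ) • (e 1 + e 4 + e 7)) ∧
    (n % 3 = 1 →
      JO (n + 2) - (4 : ℝ) • JO n =
        (e 1 + e 2 + e 4 + e 5 + e 7) - (2 : ℝ) • (1 + e 3 + e 6)) ∧
    (n % 3 = 2 →
      JO (n + 2) - (4 : ℝ) • JO n =
        (1 + e 1 + e 3 + e 4 + e 6 + e 7) - (2 : ℝ) • (e 2 + e 5)) := by
  have expand := JO_expand n
  have key : ∀ k : ℕ, (J3 (n + k + 2):ℝ) - 4 * (J3 (n + k):ℝ)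
      = if (n + k) % 3 = 1 then (-2:ℝ) else 1 := fun k => J3_dmodR (n + k)
  refine ⟨fun h => ?_, fun h => ?_, fun h => ?_⟩ <;>
      [skip; skip; skip] <;>
    rw [expand] <;>
    refine sum_coef_eq (fun k => (J3 (n + k + 2):ℝ) - 4 * (J3 (n + k):ℝ)) _ ?_
  · have c0 : (J3 (n + 0 + 2):ℝ) - 4 * (J3 (n + 0):ℝ) = 1 := by
      rw [key 0, if_neg (by omega)]
    have c1 : (J3 (n + 1 + 2):ℝ) - 4 * (J3 (n + 1):ℝ) = -2 := by
      rw [key 1, if_pos (by omega)]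
    have c2 : (J3 (n + 2 + 2):ℝ) - 4 * (J3 (n + 2):ℝ) = 1 := by
      rw [key 2, if_neg (by omega)]
    have c3 : (J3 (n + 3 + 2):ℝ) - 4 * (J3 (n + 3):ℝ) = 1 := by
      rw [key 3, if_neg (by omega)]
    have c4 : (J3 (n + 4 + 2):ℝ) - 4 * (J3 (n + 4):ℝ) = -2 := by
      rw [key 4, if_pos (by omega)]
    have c5 : (J3 (n + 5 + 2):ℝ) - 4 * (J3 (n + 5):ℝ) = 1 := by
      rw [key 5, if_neg (by omega)]
    have c6 : (J3 (n + 6 + 2):ℝ) - 4 * (J3 (n + 6):ℝ) = 1 := by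
      rw [key 6, if_neg (by omega)]
    have c7 : (J3 (n + 7 + 2):ℝ) - 4 * (J3 (n + 7):ℝ) = -2 := by
      rw [key 7, if_pos (by omega)]
    simp only [c0, c1, c2, c3, c4, c5, c6, c7]
    norm_num
    rw [show (1:Octonion) = e 0 from rfl]
    module
  · have c0 : (J3 (n + 0 + 2):ℝ) - 4 * (J3 (n + 0):ℝ) = -2 := by
      rw [key 0, if_pos (by omega)]
    have c1 : (J3 (n + 1 + 2):ℝ) - 4 * (J3 (n + 1):ℝ) = 1 := by
      rw [key 1, if_neg (by omega)]
    have c2 : (J3 (n + 2 + 2):ℝ) - 4 * (J3 (n + 2):ℝ) = 1 := by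
      rw [key 2, if_neg (by omega)]
    have c3 : (J3 (n + 3 + 2):ℝ) - 4 * (J3 (n + 3):ℝ) = -2 := by
      rw [key 3, if_pos (by omega)]
    have c4 : (J3 (n + 4 + 2):ℝ) - 4 * (J3 (n + 4):ℝ) = 1 := by
      rw [key 4, if_neg (by omega)]
    have c5 : (J3 (n + 5 + 2):ℝ) - 4 * (J3 (n + 5):ℝ) = 1 := by
      rw [key 5, if_neg (by omega)]
    have c6 : (J3 (n + 6 + 2):ℝ) - 4 * (J3 (n + 6):ℝ) = -2 := by
      rw [key 6, if_pos (by omega)]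
    have c7 : (J3 (n + 7 + 2):ℝ) - 4 * (J3 (n + 7):ℝ) = 1 := by
      rw [key 7, if_neg (by omega)]
    simp only [c0, c1, c2, c3, c4, c5, c6, c7]
    norm_num
    rw [show (1:Octonion) = e 0 from rfl]
    module
  · have c0 : (J3 (n + 0 + 2):ℝ) - 4 * (J3 (n + 0):ℝ) = 1 := by
      rw [key 0, if_neg (by omega)]
    have c1 : (J3 (n + 1 + 2):ℝ) - 4 * (J3 (n + 1):ℝ) = 1 := by
      rw [key 1, if_neg (by omega)]
    have c2 : (J3 (n + 2 + 2):ℝ) - 4 * (J3 (n + 2):ℝ) = -2 := by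
      rw [key 2, if_pos (by omega)]
    have c3 : (J3 (n + 3 + 2):ℝ) - 4 * (J3 (n + 3):ℝ) = 1 := by
      rw [key 3, if_neg (by omega)]
    have c4 : (J3 (n + 4 + 2):ℝ) - 4 * (J3 (n + 4):ℝ) = 1 := by
      rw [key 4, if_neg (by omega)]
    have c5 : (J3 (n + 5 + 2):ℝ) - 4 * (J3 (n + 5):ℝ) = -2 := by
      rw [key 5, if_pos (by omega)]
    have c6 : (J3 (n + 6 + 2):ℝ) - 4 * (J3 (n + 6):ℝ) = 1 := by
      rw [key 6, if_neg (by omega)]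
    have c7 : (J3 (n + 7 + 2):ℝ) - 4 * (J3 (n + 7):ℝ) = 1 := by
      rw [key 7, if_neg (by omega)]
    simp only [c0, c1, c2, c3, c4, c5, c6, c7]
    norm_num
    rw [show (1:Octonion) = e 0 from rfl]
    module

end
end

section
/- For every integer n ≥ 0, the squared norm Nr²(JO_n) = Σ_{s=0}^{7} (J_{n+s})² equals: (1/49)(87380·4^n + 1024·2^n + 41) if n ≡ 0 (mod 3); (1/49)(87380·4^n + 4·2^n + 38) if n ≡ 1 (mod 3); and (1/49)(87380·4^n − 1028·2^n + 33) if n ≡ 2 (mod 3). Equivalently, 49·Σ_{s=0}^{7} (J_{n+s})² equals 87380·4^n + 1024·2^n + 41, 87380·4^n + 4·2^n + 38, or 87380·4^n − 1028·2^n + 33 in the respective cases. -/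
open Quaternion

noncomputable section

/-! Binet formula: the characteristic polynomial `x³ - x² - x - 2 = (x - 2)(x² + x + 1)` has the
root `2` and the two primitive cube roots of unity, so `7 J_n = 2^(n+1) - V_n` with `V_n` of
period 3. Squaring and summing eight consecutive terms gives the geometric sum
`4^(n+1) (4^8 - 1) / 3 = 87380 · 4^n`, a cross term `2^n ∑ 2^s V_{n+s}` and a constant
`∑ V_{n+s}²`; the last two depend only on `n mod 3`. -/

def V3 : ℕ → ℤ
  | 0 => 2
  | 1 => -3
  | 2 => 1
  | m + 3 => V3 m

theorem V3_add_three_mul (m q : ℕ) : V3 (m + 3 * q) = V3 m := by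
  induction q with
  | zero => rfl
  | succ q ih => rw [Nat.mul_succ, ← Nat.add_assoc, V3, ih]

theorem V3_add_eq_V3_mod_add (n s : ℕ) : V3 (n + s) = V3 (n % 3 + s) := by
  rw [← V3_add_three_mul (n % 3 + s) (n / 3)]
  congr 1
  omega

theorem V3_add_V3_add_V3_eq_zero (m : ℕ) : V3 m + V3 (m + 1) + V3 (m + 2) = 0 := by
  induction m with
  | zero => rfl
  | succ m ih => rw [show m + 1 + 2 = m + 3 by omega, V3]; linarith

theorem seven_mul_J3 (m : ℕ) : 7 * (J3 m : ℤ) = 2 ^ (m + 1) - V3 m := by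
  induction m using J3.induct with
  | case1 | case2 | case3 => rfl
  | case4 m ih₂ ih₁ ih₀ =>
    show 7 * (J3 (m + 3) : ℤ) = 2 ^ (m + 3 + 1) - V3 (m + 3)
    rw [J3, V3]
    push_cast
    linear_combination ih₂ + ih₁ + 2 * ih₀ - V3_add_V3_add_V3_eq_zero m

theorem forty_nine_mul_sum_sq_J3 (n k : ℕ) :
    49 * ∑ s : Fin k, (J3 (n + s) : ℤ) ^ 2 =
      4 * 4 ^ n * ∑ s : Fin k, 4 ^ (s : ℕ) - 4 * 2 ^ n * ∑ s : Fin k, 2 ^ (s : ℕ) * V3 (n + s)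
        + ∑ s : Fin k, V3 (n + s) ^ 2 := by
  have hterm (s : ℕ) : 49 * (J3 (n + s) : ℤ) ^ 2 =
      4 * 4 ^ n * 4 ^ s - 4 * 2 ^ n * (2 ^ s * V3 (n + s)) + V3 (n + s) ^ 2 := by
    have h4 (i : ℕ) : (4 : ℤ) ^ i = (2 ^ i) ^ 2 := by rw [← pow_mul, mul_comm, pow_mul]; norm_num
    rw [show 49 * (J3 (n + s) : ℤ) ^ 2 = (7 * J3 (n + s)) ^ 2 by ring, seven_mul_J3, h4, h4]
    ring
  simp only [Finset.mul_sum, hterm, Finset.sum_add_distrib, Finset.sum_sub_distrib]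

theorem norm_sq_JO (n : ℕ) :
    (n % 3 = 0 →
      (49 : ℝ) * ∑ s : Fin 8, (J3 (n + (s : ℕ)) : ℝ) ^ 2 =
        87380 * 4 ^ n + 1024 * 2 ^ n + 41) ∧
    (n % 3 = 1 →
      (49 : ℝ) * ∑ s : Fin 8, (J3 (n + (s : ℕ)) : ℝ) ^ 2 =
        87380 * 4 ^ n + 4 * 2 ^ n + 38) ∧
    (n % 3 = 2 →
      (49 : ℝ) * ∑ s : Fin 8, (J3 (n + (s : ℕ)) : ℝ) ^ 2 =
        87380 * 4 ^ n - 1028 * 2 ^ n + 33) := by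
  have key : (49 : ℝ) * ∑ s : Fin 8, (J3 (n + (s : ℕ)) : ℝ) ^ 2 =
      4 * 4 ^ n * ∑ s : Fin 8, 4 ^ (s : ℕ)
        - 4 * 2 ^ n * ∑ s : Fin 8, 2 ^ (s : ℕ) * (V3 (n % 3 + s) : ℝ)
        + ∑ s : Fin 8, (V3 (n % 3 + s) : ℝ) ^ 2 := by
    simp only [← V3_add_eq_V3_mod_add]
    exact_mod_cast forty_nine_mul_sum_sq_J3 n 8
  refine ⟨fun h => ?_, fun h => ?_, fun h => ?_⟩ <;>
    rw [key, h] <;> norm_num [Fin.sum_univ_eight, V3] <;> ring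

end
end

section
/- For every integer n ≥ 0, jO_{n+2} + jO_{n+1} + jO_n = 2^{n+3}·α, where α = Σ_{s=0}^{7} 2^s e_s. -/
open Quaternion

noncomputable section

lemma j3_sum (m : ℕ) : j3 (m + 2) + j3 (m + 1) + j3 m = 2 ^ (m + 3) := by
  induction m with
  | zero => rfl
  | succ k ih =>
    show j3 (k + 3) + j3 (k + 2) + j3 (k + 1) = 2 ^ (k + 4)
    rw [show j3 (k + 3) = j3 (k + 2) + j3 (k + 1) + 2 * j3 k from rfl]
    rw [pow_succ]
    omega

open Octonion in
theorem jO_sum_three (n : ℕ) :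
    jO (n + 2) + jO (n + 1) + jO n = ((2 : ℝ) ^ (n + 3)) • alphaO := by
  unfold jO alphaO
  rw [Finset.smul_sum, ← Finset.sum_add_distrib, ← Finset.sum_add_distrib]
  refine Finset.sum_congr rfl fun s _ => ?_
  rw [← add_smul, ← add_smul, smul_smul]
  congr 1
  have h := j3_sum (n + (s : ℕ))
  have : (j3 (n + (s : ℕ) + 2) : ℝ) + j3 (n + (s : ℕ) + 1) + j3 (n + (s : ℕ))
      = 2 ^ (n + (s : ℕ) + 3) := by exact_mod_cast congrArg (Nat.cast (R := ℝ)) h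
  rw [show n + 2 + (s : ℕ) = n + (s : ℕ) + 2 by ring,
    show n + 1 + (s : ℕ) = n + (s : ℕ) + 1 by ring, this]
  ring

end
end

section
/- For every integer n ≥ 0, jO_{n+2} − 4·jO_n equals: −3(1 + e_2 + e_3 + e_5 + e_6) + 6(e_1 + e_4 + e_7) if n ≡ 0 (mod 3); −3(e_1 + e_2 + e_4 + e_5 + e_7) + 6(1 + e_3 + e_6) if n ≡ 1 (mod 3); and −3(1 + e_1 + e_3 + e_4 + e_6) − 3e_7 + 6(e_2 + e_5) if n ≡ 2 (mod 3). -/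
open Quaternion

noncomputable section

/-- Auxiliary: the correction term `j_{n+2} - 4 j_n`, depending only on `n mod 3`. -/
def c3 (n : ℕ) : ℝ := if n % 3 = 1 then 6 else -3

lemma j3_key : ∀ n : ℕ, (j3 (n + 2) : ℝ) = 4 * j3 n + c3 n := by
  have H : ∀ n : ℕ, ((j3 (n + 2) : ℝ) = 4 * j3 n + c3 n)
      ∧ ((j3 (n + 3) : ℝ) = 4 * j3 (n + 1) + c3 (n + 1))
      ∧ ((j3 (n + 4) : ℝ) = 4 * j3 (n + 2) + c3 (n + 2)) := by
    intro n
    induction n with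
    | zero => norm_num [j3, c3]
    | succ m ih =>
      obtain ⟨h0, h1, h2⟩ := ih
      refine ⟨h1, h2, ?_⟩
      have hrec : (j3 (m + 5) : ℝ) = j3 (m + 4) + j3 (m + 3) + 2 * j3 (m + 2) := by
        show ((j3 (m + 2 + 3) : ℝ) = _)
        rw [j3]; push_cast; ring
      have hrec2 : (j3 (m + 3) : ℝ) = j3 (m + 2) + j3 (m + 1) + 2 * j3 m := by
        rw [j3]; push_cast; ring
      have hc : c3 (m + 2) + c3 (m + 1) + 2 * c3 m = c3 (m + 3) := by
        have : m % 3 = 0 ∨ m % 3 = 1 ∨ m % 3 = 2 := by omega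
        rcases this with h | h | h <;>
          simp [c3, Nat.add_mod, h] <;> norm_num
      rw [show m + 1 + 4 = m + 5 from by ring, show m + 1 + 2 = m + 3 from by ring]
      linear_combination hrec + h2 + h1 + 2 * h0 - 4 * hrec2 + hc
  exact fun n => (H n).1

open Octonion in
lemma jO_general (n : ℕ) :
    jO (n + 2) - (4 : ℝ) • jO n =
      c3 n • e 0 + c3 (n+1) • e 1 + c3 (n+2) • e 2 + c3 (n+3) • e 3
        + c3 (n+4) • e 4 + c3 (n+5) • e 5 + c3 (n+6) • e 6 + c3 (n+7) • e 7 := by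
  simp only [jO, Fin.sum_univ_eight, Fin.isValue, Fin.val_zero, Fin.val_one, Fin.val_two,
    show ((3 : Fin 8) : ℕ) = 3 from rfl, show ((4 : Fin 8) : ℕ) = 4 from rfl,
    show ((5 : Fin 8) : ℕ) = 5 from rfl, show ((6 : Fin 8) : ℕ) = 6 from rfl,
    show ((7 : Fin 8) : ℕ) = 7 from rfl, add_zero]
  rw [show n + 2 + 1 = n + 1 + 2 from by ring, show n + 2 + 3 = n + 3 + 2 from by ring,
    show n + 2 + 4 = n + 4 + 2 from by ring,
    show n + 2 + 5 = n + 5 + 2 from by ring, show n + 2 + 6 = n + 6 + 2 from by ring,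
    show n + 2 + 7 = n + 7 + 2 from by ring]
  rw [j3_key (n+7), j3_key (n+6), j3_key (n+5), j3_key (n+4), j3_key (n+3), j3_key (n+2),
    j3_key (n+1), j3_key n]
  module

open Octonion in
theorem jO_sub_four_jO (n : ℕ) :
    (n % 3 = 0 →
      jO (n + 2) - (4 : ℝ) • jO n =
        -((3 : ℝ) • (1 + e 2 + e 3 + e 5 + e 6)) + (6 : ℝ) • (e 1 + e 4 + e 7)) ∧
    (n % 3 = 1 →
      jO (n + 2) - (4 : ℝ) • jO n =
        -((3 : ℝ) • (e 1 + e 2 + e 4 + e 5 + e 7)) + (6 : ℝ) • (1 + e 3 + e 6)) ∧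
    (n % 3 = 2 →
      jO (n + 2) - (4 : ℝ) • jO n =
        -((3 : ℝ) • (1 + e 1 + e 3 + e 4 + e 6)) - (3 : ℝ) • e 7
          + (6 : ℝ) • (e 2 + e 5)) := by
  have h1 : (1 : Octonion) = e 0 := rfl
  have c6 : ∀ m : ℕ, m % 3 = 1 → c3 m = 6 := fun m h => by simp [c3, h]
  have cn3 : ∀ m : ℕ, m % 3 ≠ 1 → c3 m = -3 := fun m h => by simp [c3, h]
  refine ⟨fun h => ?_, fun h => ?_, fun h => ?_⟩ <;>
    rw [jO_general n, h1] <;>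
    [ (rw [cn3 n (by omega), c6 (n+1) (by omega), cn3 (n+2) (by omega),
        cn3 (n+3) (by omega), c6 (n+4) (by omega), cn3 (n+5) (by omega),
        cn3 (n+6) (by omega), c6 (n+7) (by omega)]; module);
      (rw [c6 n (by omega), cn3 (n+1) (by omega), cn3 (n+2) (by omega),
        c6 (n+3) (by omega), cn3 (n+4) (by omega), cn3 (n+5) (by omega),
        c6 (n+6) (by omega), cn3 (n+7) (by omega)]; module);
      (rw [cn3 n (by omega), cn3 (n+1) (by omega), c6 (n+2) (by omega),
        cn3 (n+3) (by omega), cn3 (n+4) (by omega), c6 (n+5) (by omega),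
        cn3 (n+6) (by omega), cn3 (n+7) (by omega)]; module)]

end
end

section
/- For every integer n ≥ 0, the squared norm Nr²(jO_n) = Σ_{s=0}^{7} (j_{n+s})² equals: (1/49)(21845·2^{2n+6} − 12288·2^n + 369) if n ≡ 0 (mod 3); (1/49)(21845·2^{2n+6} − 48·2^n + 342) if n ≡ 1 (mod 3); and (1/49)(21845·2^{2n+6} + 12336·2^n + 297) if n ≡ 2 (mod 3). Equivalently, 49·Σ_{s=0}^{7} (j_{n+s})² equals 21845·2^{2n+6} − 12288·2^n + 369, 21845·2^{2n+6} − 48·2^n + 342, or 21845·2^{2n+6} + 12336·2^n + 297 in the respective cases. -/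
open Quaternion

noncomputable section

def qq (n : ℕ) : ℝ := if n % 3 = 0 then 6 else if n % 3 = 1 then -9 else 3

lemma seven_j3 : ∀ n, 7 * (j3 n : ℝ) = 2 ^ (n + 3) + qq n := by
  intro n
  induction n using Nat.strong_induction_on with
  | _ n ih =>
    match n with
    | 0 => norm_num [j3, qq]
    | 1 => norm_num [j3, qq]
    | 2 => norm_num [j3, qq]
    | (m+3) =>
      have h0 := ih m (by omega)
      have h1 := ih (m+1) (by omega)
      have h2 := ih (m+2) (by omega)
      have p3 : (2:ℝ) ^ (m+1+3) = 2 * 2 ^ (m+3) := by ring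
      have p4 : (2:ℝ) ^ (m+2+3) = 4 * 2 ^ (m+3) := by ring
      have p5 : (2:ℝ) ^ (m+3+3) = 8 * 2 ^ (m+3) := by ring
      have hm : m % 3 = 0 ∨ m % 3 = 1 ∨ m % 3 = 2 := by omega
      show 7 * ((j3 (m+2) + j3 (m+1) + 2 * j3 m : ℕ) : ℝ) = 2 ^ (m+3+3) + qq (m+3)
      push_cast
      rcases hm with h | h | h
      · simp only [qq, show (m+3) % 3 = m % 3 by omega, h,
          show (m+1) % 3 = 1 by omega, show (m+2) % 3 = 2 by omega] at h0 h1 h2 ⊢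
        norm_num at h0 h1 h2 ⊢
        linarith
      · simp only [qq, show (m+3) % 3 = m % 3 by omega, h,
          show (m+1) % 3 = 2 by omega, show (m+2) % 3 = 0 by omega] at h0 h1 h2 ⊢
        norm_num at h0 h1 h2 ⊢
        linarith
      · simp only [qq, show (m+3) % 3 = m % 3 by omega, h,
          show (m+1) % 3 = 0 by omega, show (m+2) % 3 = 1 by omega] at h0 h1 h2 ⊢
        norm_num at h0 h1 h2 ⊢
        linarith

theorem norm_sq_jO (n : ℕ) :
    (n % 3 = 0 →
      (49 : ℝ) * ∑ s : Fin 8, (j3 (n + (s : ℕ)) : ℝ) ^ 2 =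
        21845 * 2 ^ (2 * n + 6) - 12288 * 2 ^ n + 369) ∧
    (n % 3 = 1 →
      (49 : ℝ) * ∑ s : Fin 8, (j3 (n + (s : ℕ)) : ℝ) ^ 2 =
        21845 * 2 ^ (2 * n + 6) - 48 * 2 ^ n + 342) ∧
    (n % 3 = 2 →
      (49 : ℝ) * ∑ s : Fin 8, (j3 (n + (s : ℕ)) : ℝ) ^ 2 =
        21845 * 2 ^ (2 * n + 6) + 12336 * 2 ^ n + 297) := by
  have key : ∀ m, (j3 m : ℝ) = (2 ^ (m + 3) + qq m) / 7 := by
    intro m; have := seven_j3 m; linarith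
  simp only [Fin.sum_univ_eight, show ((0:Fin 8):ℕ)=0 from rfl,
    show ((1:Fin 8):ℕ)=1 from rfl, show ((2:Fin 8):ℕ)=2 from rfl,
    show ((3:Fin 8):ℕ)=3 from rfl, show ((4:Fin 8):ℕ)=4 from rfl,
    show ((5:Fin 8):ℕ)=5 from rfl, show ((6:Fin 8):ℕ)=6 from rfl,
    show ((7:Fin 8):ℕ)=7 from rfl, key]
  have P : ∀ k : ℕ, (2:ℝ) ^ (n + k) = 2 ^ n * 2 ^ k := fun k => pow_add 2 n k
  have P2 : (2:ℝ) ^ (2 * n + 6) = (2 ^ n) ^ 2 * 64 := by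
    rw [pow_add, two_mul, pow_add, ← pow_two]; norm_num
  refine ⟨fun h => ?_, fun h => ?_, fun h => ?_⟩ <;>
    simp only [qq, show (n+0)%3 = n%3 by omega, h,
      show (n+1)%3 = (n%3+1)%3 by omega, show (n+2)%3 = (n%3+2)%3 by omega,
      show (n+3)%3 = n%3 by omega, show (n+4)%3 = (n%3+1)%3 by omega,
      show (n+5)%3 = (n%3+2)%3 by omega, show (n+6)%3 = n%3 by omega,
      show (n+7)%3 = (n%3+1)%3 by omega, h] <;>
    norm_num <;>
    simp only [show n+0+3=n+3 from rfl, show n+1+3=n+4 from rfl,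
      show n+2+3=n+5 from rfl, show n+3+3=n+6 from rfl, show n+4+3=n+7 from rfl,
      show n+5+3=n+8 from rfl, show n+6+3=n+9 from rfl, show n+7+3=n+10 from rfl,
      P, P2] <;>
    field_simp <;> ring

end
end

section
/- For every integer n ≥ 0, jO_{n+3} − 3·JO_{n+3} = 2·jO_n. -/
open Quaternion

noncomputable section

lemma key : ∀ n : ℕ, j3 (n + 3) = 3 * J3 (n + 3) + 2 * j3 n := by
  intro n
  induction n using Nat.strong_induction_on with
  | _ n ih =>
    match n with
    | 0 => decide
    | 1 => decide
    | 2 => decide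
    | m + 3 =>
      have h0 := ih m (by omega)
      have h1 := ih (m + 1) (by omega)
      have h2 := ih (m + 2) (by omega)
      show j3 (m + 3 + 3) = 3 * J3 (m + 3 + 3) + 2 * j3 (m + 3)
      have hj : j3 (m + 3 + 3) = j3 (m + 2 + 3) + j3 (m + 1 + 3) + 2 * j3 (m + 3) := by
        show j3 ((m + 3) + 3) = _
        rw [j3]
      have hJ : J3 (m + 3 + 3) = J3 (m + 2 + 3) + J3 (m + 1 + 3) + 2 * J3 (m + 3) := by
        show J3 ((m + 3) + 3) = _
        rw [J3]
      have hr : j3 (m + 3) = j3 (m + 2) + j3 (m + 1) + 2 * j3 m := j3.eq_4 m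
      omega

theorem jO_sub_three_JO (n : ℕ) :
    jO (n + 3) - (3 : ℝ) • JO (n + 3) = (2 : ℝ) • jO n := by
  rw [jO, JO, jO, Finset.smul_sum, Finset.smul_sum, ← Finset.sum_sub_distrib]
  refine Finset.sum_congr rfl fun s _ => ?_
  rw [smul_smul, smul_smul, ← sub_smul]
  congr 1
  have := key (n + (s : ℕ))
  have e1 : n + 3 + (s : ℕ) = n + (s : ℕ) + 3 := by ring
  rw [e1, this]
  push_cast
  ring

end
end

section
/- For every integer n ≥ 0, jO_n + jO_{n+1} = 3·JO_{n+2}. -/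
open Quaternion

noncomputable section

theorem key_j3 : ∀ n, j3 n + j3 (n + 1) = 3 * J3 (n + 2)
  | 0 => rfl
  | 1 => rfl
  | 2 => rfl
  | (n + 3) => by
    have h0 := key_j3 n
    have h1 := key_j3 (n + 1)
    have h2 := key_j3 (n + 2)
    simp only [show n + 1 + 1 = n + 2 from rfl, show n + 1 + 2 = n + 3 from rfl,
      show n + 2 + 1 = n + 3 from rfl, show n + 2 + 2 = n + 4 from rfl] at h1 h2
    show j3 (n + 3) + j3 (n + 4) = 3 * J3 (n + 5)
    have e1 : j3 (n + 3) = j3 (n + 2) + j3 (n + 1) + 2 * j3 n := rfl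
    have e2 : j3 (n + 4) = j3 (n + 3) + j3 (n + 2) + 2 * j3 (n + 1) := rfl
    have e3 : J3 (n + 5) = J3 (n + 4) + J3 (n + 3) + 2 * J3 (n + 2) := rfl
    omega

theorem jO_add_jO (n : ℕ) :
    jO n + jO (n + 1) = (3 : ℝ) • JO (n + 2) := by
  unfold jO JO
  rw [Finset.smul_sum, ← Finset.sum_add_distrib]
  refine Finset.sum_congr rfl fun s _ => ?_
  rw [← add_smul, smul_smul]
  congr 1
  have := key_j3 (n + s)
  rw [show n + 1 + (s : ℕ) = n + (s : ℕ) + 1 by ring,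
      show n + 2 + (s : ℕ) = n + (s : ℕ) + 2 by ring]
  exact_mod_cast this

end
end

section
/- For every integer n ≥ 0, jO_n − JO_{n+2} equals: 1 − e_1 + e_3 − e_4 + e_6 − e_7 if n ≡ 0 (mod 3); −1 + e_2 − e_3 + e_5 − e_6 if n ≡ 1 (mod 3); and e_1 − e_2 + e_4 − e_5 + e_7 if n ≡ 2 (mod 3). -/
open Quaternion

noncomputable section

lemma keyZ (n : ℕ) : (j3 n : ℤ) - J3 (n + 2) =
    if n % 3 = 0 then 1 else if n % 3 = 1 then -1 else 0 := by
  induction n using Nat.strong_induction_on with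
  | _ n ih =>
    match n with
    | 0 => norm_num [j3, J3]
    | 1 => norm_num [j3, J3]
    | 2 => norm_num [j3, J3]
    | (m + 3) =>
      have h0 := ih m (by omega)
      have h1 := ih (m + 1) (by omega)
      have h2 := ih (m + 2) (by omega)
      have e1 : j3 (m + 3) = j3 (m + 2) + j3 (m + 1) + 2 * j3 m := rfl
      have e2 : J3 (m + 3 + 2) = J3 (m + 4) + J3 (m + 3) + 2 * J3 (m + 2) := rfl
      rw [e1, e2]
      have hm3 : (m + 3) % 3 = m % 3 := by omega
      rw [hm3]
      have r1 : J3 (m + 1 + 2) = J3 (m + 3) := rfl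
      have r2 : J3 (m + 2 + 2) = J3 (m + 4) := rfl
      rw [r1] at h1; rw [r2] at h2
      have : m % 3 = 0 ∨ m % 3 = 1 ∨ m % 3 = 2 := by omega
      rcases this with h | h | h
      · have m1 : (m + 1) % 3 = 1 := by omega
        have m2 : (m + 2) % 3 = 2 := by omega
        rw [h] at h0 ⊢; rw [m1] at h1; rw [m2] at h2
        norm_num at h0 h1 h2 ⊢
        omega
      · have m1 : (m + 1) % 3 = 2 := by omega
        have m2 : (m + 2) % 3 = 0 := by omega
        rw [h] at h0 ⊢; rw [m1] at h1; rw [m2] at h2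
        norm_num at h0 h1 h2 ⊢
        omega
      · have m1 : (m + 1) % 3 = 0 := by omega
        have m2 : (m + 2) % 3 = 1 := by omega
        rw [h] at h0 ⊢; rw [m1] at h1; rw [m2] at h2
        norm_num at h0 h1 h2 ⊢
        omega

lemma keyR (n : ℕ) : (j3 n : ℝ) - J3 (n + 2) =
    if n % 3 = 0 then 1 else if n % 3 = 1 then -1 else 0 := by
  have := keyZ n
  have : ((j3 n : ℤ) : ℝ) - ((J3 (n + 2) : ℤ) : ℝ) =
      (((if n % 3 = 0 then 1 else if n % 3 = 1 then -1 else 0 : ℤ)) : ℝ) := by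
    rw [← Int.cast_sub, this]
  push_cast at this
  split_ifs at this ⊢ <;> simpa using this

open Octonion in
theorem jO_sub_JO_succ_succ (n : ℕ) :
    (n % 3 = 0 → jO n - JO (n + 2) = 1 - e 1 + e 3 - e 4 + e 6 - e 7) ∧
    (n % 3 = 1 → jO n - JO (n + 2) = -1 + e 2 - e 3 + e 5 - e 6) ∧
    (n % 3 = 2 → jO n - JO (n + 2) = e 1 - e 2 + e 4 - e 5 + e 7) := by
  have E : jO n - JO (n + 2) =
      ∑ s : Fin 8, ((j3 (n + (s : ℕ)) : ℝ) - J3 (n + (s : ℕ) + 2)) • Octonion.e s := by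
    unfold jO JO
    rw [← Finset.sum_sub_distrib]
    refine Finset.sum_congr rfl fun s _ => ?_
    have hidx : n + 2 + (s : ℕ) = n + (s : ℕ) + 2 := by omega
    rw [hidx, ← sub_smul]
  have K : ∀ s : Fin 8, ((j3 (n + (s : ℕ)) : ℝ) - J3 (n + (s : ℕ) + 2)) =
      if (n + (s : ℕ)) % 3 = 0 then 1 else if (n + (s : ℕ)) % 3 = 1 then -1 else 0 :=
    fun s => keyR (n + s)
  have f0 : ((0 : Fin 8) : ℕ) = 0 := rfl
  have f1 : ((1 : Fin 8) : ℕ) = 1 := rfl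
  have f2 : ((2 : Fin 8) : ℕ) = 2 := rfl
  have f3 : ((3 : Fin 8) : ℕ) = 3 := rfl
  have f4 : ((4 : Fin 8) : ℕ) = 4 := rfl
  have f5 : ((5 : Fin 8) : ℕ) = 5 := rfl
  have f6 : ((6 : Fin 8) : ℕ) = 6 := rfl
  have f7 : ((7 : Fin 8) : ℕ) = 7 := rfl
  have he0 : Octonion.e 0 = 1 := rfl
  refine ⟨fun h => ?_, fun h => ?_, fun h => ?_⟩ <;>
  · rw [E, Fin.sum_univ_eight]
    rw [K 0, K 1, K 2, K 3, K 4, K 5, K 6, K 7]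
    simp only [f0, f1, f2, f3, f4, f5, f6, f7]
    norm_num [Nat.add_mod, h, one_smul, neg_one_smul, zero_smul]
    try simp only [he0]
    abel

end
end

section
/- For every integer n ≥ 0, jO_n − 4·JO_n equals: 2 − 3e_1 + e_2 + 2e_3 − 3e_4 + e_5 + 2e_6 − 3e_7 if n ≡ 0 (mod 3); −3 + e_1 + 2e_2 − 3e_3 + e_4 + 2e_5 − 3e_6 + e_7 if n ≡ 1 (mod 3); and 1 + 2e_1 − 3e_2 + e_3 + 2e_4 − 3e_5 + e_6 + 2e_7 if n ≡ 2 (mod 3). -/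
open Quaternion

noncomputable section

/-- difference sequence -/
def dd (n : ℕ) : ℝ := (j3 n : ℝ) - 4 * J3 n

lemma dd_rec (n : ℕ) : dd (n + 3) = dd (n + 2) + dd (n + 1) + 2 * dd n := by
  simp only [dd, J3, j3]
  push_cast
  ring

lemma dd_period : ∀ n, dd (n + 3) = dd n ∧ dd (n + 4) = dd (n + 1) ∧ dd (n + 5) = dd (n + 2) := by
  intro n
  induction n with
  | zero =>
    refine ⟨?_, ?_, ?_⟩ <;> · show dd _ = dd _; norm_num [dd, J3, j3]
  | succ m ih =>
    obtain ⟨h1, h2, h3⟩ := ih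
    refine ⟨h2, h3, ?_⟩
    have e1 : m + 1 + 5 = (m + 3) + 3 := by ring
    have e2 : m + 1 + 2 = m + 3 := by ring
    have a1 : m + 3 + 2 = m + 5 := by ring
    have a2 : m + 3 + 1 = m + 4 := by ring
    rw [e1, e2, dd_rec (m + 3), a1, a2]
    linarith [dd_rec m, h1, h2, h3]

lemma dd_add_three (n : ℕ) : dd (n + 3) = dd n := (dd_period n).1

lemma dd_mod (n : ℕ) : dd n = dd (n % 3) := by
  have h : ∀ k m, dd (m + 3 * k) = dd m := by
    intro k
    induction k with
    | zero => simp
    | succ l ih =>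
      intro m
      have : m + 3 * (l + 1) = (m + 3 * l) + 3 := by ring
      rw [this, dd_add_three, ih]
  conv_lhs => rw [← Nat.mod_add_div n 3]
  exact h (n / 3) (n % 3)

lemma dd0 : dd 0 = 2 := by norm_num [dd, J3, j3]
lemma dd1 : dd 1 = -3 := by norm_num [dd, J3, j3]
lemma dd2 : dd 2 = 1 := by norm_num [dd, J3, j3]

open Octonion in
lemma jO_sub_JO_eq (n : ℕ) :
    jO n - (4 : ℝ) • JO n = ∑ s : Fin 8, dd (n + (s : ℕ)) • e s := by
  simp only [jO, JO, Finset.smul_sum, ← Finset.sum_sub_distrib, dd, sub_smul, smul_smul]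

open Octonion in
theorem jO_sub_four_JO (n : ℕ) :
    (n % 3 = 0 →
      jO n - (4 : ℝ) • JO n =
        (2 : ℝ) • 1 - (3 : ℝ) • e 1 + e 2 + (2 : ℝ) • e 3
          - (3 : ℝ) • e 4 + e 5 + (2 : ℝ) • e 6 - (3 : ℝ) • e 7) ∧
    (n % 3 = 1 →
      jO n - (4 : ℝ) • JO n =
        -((3 : ℝ) • (1 : Octonion)) + e 1 + (2 : ℝ) • e 2 - (3 : ℝ) • e 3
          + e 4 + (2 : ℝ) • e 5 - (3 : ℝ) • e 6 + e 7) ∧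
    (n % 3 = 2 →
      jO n - (4 : ℝ) • JO n =
        1 + (2 : ℝ) • e 1 - (3 : ℝ) • e 2 + e 3
          + (2 : ℝ) • e 4 - (3 : ℝ) • e 5 + e 6 + (2 : ℝ) • e 7) := by
  refine ⟨fun h => ?_, fun h => ?_, fun h => ?_⟩ <;>
  · rw [jO_sub_JO_eq, Fin.sum_univ_eight]
    have c : ∀ k : ℕ, dd (n + k) = dd ((n % 3 + k) % 3) := by
      intro k
      rw [dd_mod]
      congr 1
      omega
    simp only [c, h, Fin.isValue, Fin.val_zero, Fin.val_one,
      show ((2 : Fin 8) : ℕ) = 2 from rfl, show ((3 : Fin 8) : ℕ) = 3 from rfl,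
      show ((4 : Fin 8) : ℕ) = 4 from rfl, show ((5 : Fin 8) : ℕ) = 5 from rfl,
      show ((6 : Fin 8) : ℕ) = 6 from rfl, show ((7 : Fin 8) : ℕ) = 7 from rfl]
    norm_num [dd0, dd1, dd2]
    simp only [show Octonion.e 0 = (1 : Octonion) from rfl, sub_eq_add_neg]


end
end

section
/- For every integer n ≥ 0 with n ≡ 0 (mod 3), the octonion product satisfies 49·(JO_n · jO_n) = (99 − 520·2^n − 349488·4^n)·e_0 + (2^{2n+6} + 7838·2^n + 36)·e_1 + (2^{2n+7} − 410·2^n − 12)·e_2 + (2^{2n+8} + 4864·2^n − 24)·e_3 + (2^{2n+9} + 3274·2^n + 36)·e_4 + (2^{2n+10} + 850·2^n − 12)·e_5 + (2^{2n+11} + 5424·2^n − 24)·e_6 + (2^{2n+12} − 4426·2^n + 36)·e_7. -/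
open Quaternion

noncomputable section

/-! A solution of `u (n + 3) = u (n + 2) + u (n + 1) + 2 * u n` is `c * 2 ^ n` plus a `3`-periodic
sequence (the other characteristic roots are the primitive cube roots of unity), where
`7 * c = u 0 + u 1 + u 2`. So for `3 ∣ n` every coordinate `J_{n+s}`, `j_{n+s}` of `JO n`, `jO n`
is an affine function of `2 ^ n`, and the identity becomes a polynomial identity in `2 ^ n`,
checked coordinatewise in the Cayley–Dickson model. -/

def jacobsthalRec (R : Type*) [CommRing R] : LinearRecurrence R := ⟨3, ![2, 1, 1]⟩

namespace jacobsthalRec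

variable {R : Type*} [CommRing R]

theorem isSolution_iff {u : ℕ → R} :
    (jacobsthalRec R).IsSolution u ↔ ∀ n, u (n + 3) = u (n + 2) + u (n + 1) + 2 * u n := by
  refine forall_congr' fun n => Eq.congr_right ?_
  change ∑ i : Fin 3, ![(2 : R), 1, 1] i * u (n + i) = _
  simp [Fin.sum_univ_three]
  ring

theorem isSolution_J3 : (jacobsthalRec R).IsSolution fun n => (J3 n : R) :=
  isSolution_iff.2 fun n => by simp only [J3]; push_cast; ring

theorem isSolution_j3 : (jacobsthalRec R).IsSolution fun n => (j3 n : R) :=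
  isSolution_iff.2 fun n => by simp only [j3]; push_cast; ring

theorem isSolution_two_pow : (jacobsthalRec R).IsSolution fun n => (2 : R) ^ n :=
  isSolution_iff.2 fun n => by ring

theorem periodic_of_isSolution {u : ℕ → R} (hu : (jacobsthalRec R).IsSolution u)
    (h₀ : u 0 + u 1 + u 2 = 0) : Function.Periodic u 3 := by
  rw [isSolution_iff] at hu
  -- `u (n + 1) + u (n + 2) + u (n + 3) = 2 * (u n + u (n + 1) + u (n + 2))`
  have hsum : ∀ n, u n + u (n + 1) + u (n + 2) = 0 := by
    intro n
    induction n with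
    | zero => exact h₀
    | succ n ih => linear_combination 2 * ih + hu n
  intro n
  linear_combination hu n + hsum n

theorem apply_add_of_three_dvd {u : ℕ → R} (hu : (jacobsthalRec R).IsSolution u) {c : R}
    (hc : u 0 + u 1 + u 2 = 7 * c) {n : ℕ} (hn : 3 ∣ n) (s : ℕ) :
    u (n + s) = u s + c * 2 ^ s * (2 ^ n - 1) := by
  have hw : (jacobsthalRec R).IsSolution (u - c • fun m => (2 : R) ^ m) :=
    (jacobsthalRec R).solSpace.sub_mem hu
      ((jacobsthalRec R).solSpace.smul_mem c isSolution_two_pow)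
  have hper := periodic_of_isSolution hw <| by
    simp only [Pi.sub_apply, Pi.smul_apply, smul_eq_mul]
    linear_combination hc
  obtain ⟨k, rfl⟩ := hn
  have hshift := hper.nat_mul k s
  simp only [Pi.sub_apply, Pi.smul_apply, smul_eq_mul, Nat.cast_id] at hshift
  rw [show 3 * k + s = s + k * 3 by ring]
  linear_combination hshift

end jacobsthalRec

namespace Octonion

@[ext]
theorem ext {p q : Octonion} (h₁ : p.1 = q.1) (h₂ : p.2 = q.2) : p = q := Prod.ext h₁ h₂

theorem fst_add (p q : Octonion) : (p + q).1 = p.1 + q.1 := rfl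

theorem snd_add (p q : Octonion) : (p + q).2 = p.2 + q.2 := rfl

theorem fst_smul (r : ℝ) (p : Octonion) : (r • p).1 = r • p.1 := rfl

theorem snd_smul (r : ℝ) (p : Octonion) : (r • p).2 = r • p.2 := rfl

theorem fst_mul (p q : Octonion) : (p * q).1 = p.1 * q.1 - star q.2 * p.2 := rfl

theorem snd_mul (p q : Octonion) : (p * q).2 = q.2 * p.1 + p.2 * star q.1 := rfl

section

variable (a₀ a₁ a₂ a₃ a₄ a₅ a₆ a₇ : ℝ)

-- The projections are pushed inside before `e` is unfolded: the quaternion literals in `e` are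
-- typed `ℍ[ℝ,-1,0,-1]`, on which the `Quaternion.*` simp lemmas do not fire.
theorem fst_smul_e_add :
    (a₀ • e 0 + a₁ • e 1 + a₂ • e 2 + a₃ • e 3 + a₄ • e 4 + a₅ • e 5 + a₆ • e 6
        + a₇ • e 7).1 =
      ⟨a₀, a₁, a₂, a₃⟩ := by
  ext <;>
  · simp only [fst_add, fst_smul, Quaternion.re_add, Quaternion.imI_add, Quaternion.imJ_add,
      Quaternion.imK_add, Quaternion.re_smul, Quaternion.imI_smul, Quaternion.imJ_smul,
      Quaternion.imK_smul]
    simp [e]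

theorem snd_smul_e_add :
    (a₀ • e 0 + a₁ • e 1 + a₂ • e 2 + a₃ • e 3 + a₄ • e 4 + a₅ • e 5 + a₆ • e 6
        + a₇ • e 7).2 =
      ⟨a₄, a₅, a₆, a₇⟩ := by
  ext <;>
  · simp only [snd_add, snd_smul, Quaternion.re_add, Quaternion.imI_add, Quaternion.imJ_add,
      Quaternion.imK_add, Quaternion.re_smul, Quaternion.imI_smul, Quaternion.imJ_smul,
      Quaternion.imK_smul]
    simp [e]

end

end Octonion

open Octonion in
theorem JO_mul_jO (n : ℕ) (h : n % 3 = 0) :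
    (49 : ℝ) • (JO n * jO n) =
      ((99 : ℝ) - 520 * 2 ^ n - 349488 * 4 ^ n) • e 0
      + ((2 : ℝ) ^ (2 * n + 6) + 7838 * 2 ^ n + 36) • e 1
      + ((2 : ℝ) ^ (2 * n + 7) - 410 * 2 ^ n - 12) • e 2
      + ((2 : ℝ) ^ (2 * n + 8) + 4864 * 2 ^ n - 24) • e 3
      + ((2 : ℝ) ^ (2 * n + 9) + 3274 * 2 ^ n + 36) • e 4
      + ((2 : ℝ) ^ (2 * n + 10) + 850 * 2 ^ n - 12) • e 5
      + ((2 : ℝ) ^ (2 * n + 11) + 5424 * 2 ^ n - 24) • e 6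
      + ((2 : ℝ) ^ (2 * n + 12) - 4426 * 2 ^ n + 36) • e 7 := by
  have hn : 3 ∣ n := Nat.dvd_of_mod_eq_zero h
  have hJ (s : ℕ) : (J3 (n + s) : ℝ) = J3 s + 2 / 7 * 2 ^ s * (2 ^ n - 1) :=
    jacobsthalRec.apply_add_of_three_dvd jacobsthalRec.isSolution_J3 (by norm_num [J3]) hn s
  have hj (s : ℕ) : (j3 (n + s) : ℝ) = j3 s + 8 / 7 * 2 ^ s * (2 ^ n - 1) :=
    jacobsthalRec.apply_add_of_three_dvd jacobsthalRec.isSolution_j3 (by norm_num [j3]) hn s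
  have h4 : (4 : ℝ) ^ n = 2 ^ n * 2 ^ n := by rw [← mul_pow]; norm_num
  rw [JO, jO, Fin.sum_univ_eight, Fin.sum_univ_eight, h4]
  ext <;>
  · simp only [fst_smul, snd_smul, fst_mul, snd_mul, Quaternion.re_smul, Quaternion.imI_smul,
      Quaternion.imJ_smul, Quaternion.imK_smul, Quaternion.re_sub, Quaternion.imI_sub,
      Quaternion.imJ_sub, Quaternion.imK_sub, Quaternion.re_add, Quaternion.imI_add,
      Quaternion.imJ_add, Quaternion.imK_add, Quaternion.re_mul, Quaternion.imI_mul,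
      Quaternion.imJ_mul, Quaternion.imK_mul, Quaternion.re_star, Quaternion.imI_star,
      Quaternion.imJ_star, Quaternion.imK_star]
    simp only [fst_smul_e_add, snd_smul_e_add, hJ, hj]
    norm_num [J3, j3]
    ring

end
end

section
/- For every integer n ≥ 0, the Binet formula for the third order Jacobsthal numbers holds in ℂ: J_n = (2/7)·2^n − ((3 + 2i√3)/21)·ω₁^n − ((3 − 2i√3)/21)·ω₂^n, where ω₁ = (−1 + i√3)/2 and ω₂ = (−1 − i√3)/2 are the two primitive complex cube roots of unity. -/
lemma J3_binet_aux (t : ℂ) (ht : t ^ 2 = -3) : ∀ n : ℕ,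
    (J3 n : ℂ) = (2 / 7) * 2 ^ n - ((3 + 2 * t) / 21) * ((-1 + t) / 2) ^ n
      - ((3 - 2 * t) / 21) * ((-1 - t) / 2) ^ n := by
  intro n
  induction n using Nat.strong_induction_on with
  | _ n ih =>
    match n with
    | 0 => simp only [J3, Nat.cast_zero, pow_zero]; ring
    | 1 =>
      simp only [J3, Nat.cast_one, pow_one]
      linear_combination (2/21 : ℂ) * ht
    | 2 =>
      simp only [J3, Nat.cast_one]
      linear_combination (-1/42 : ℂ) * ht
    | n + 3 =>
      have ih0 := ih n (by omega)
      have ih1 := ih (n+1) (by omega)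
      have ih2 := ih (n+2) (by omega)
      have h1 : ((-1 + t) / 2) ^ 3 = ((-1 + t) / 2) ^ 2 + ((-1 + t) / 2) + 2 := by
        linear_combination ((t - 5)/8) * ht
      have h2 : ((-1 - t) / 2) ^ 3 = ((-1 - t) / 2) ^ 2 + ((-1 - t) / 2) + 2 := by
        linear_combination ((-t - 5)/8) * ht
      show ((J3 (n+2) + J3 (n+1) + 2 * J3 n : ℕ) : ℂ) = _
      push_cast
      linear_combination ih2 + ih1 + 2 * ih0
        - ((3 + 2 * t) / 21) * ((-1 + t) / 2) ^ n * h1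
        - ((3 - 2 * t) / 21) * ((-1 - t) / 2) ^ n * h2
        + (t^2/42 + t/12 - 5/28) * ((-1 - t) / 2) ^ n * ht
        + (t^2/42 - t/12 - 5/28) * ((-1 + t) / 2) ^ n * ht

theorem J3_binet (n : ℕ) :
    (J3 n : ℂ) =
      (2 / 7) * 2 ^ n
      - ((3 + 2 * Complex.I * (Real.sqrt 3 : ℂ)) / 21) *
          ((-1 + Complex.I * (Real.sqrt 3 : ℂ)) / 2) ^ n
      - ((3 - 2 * Complex.I * (Real.sqrt 3 : ℂ)) / 21) *
          ((-1 - Complex.I * (Real.sqrt 3 : ℂ)) / 2) ^ n := by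
  have ht : (Complex.I * (Real.sqrt 3 : ℂ)) ^ 2 = -3 := by
    rw [mul_pow, Complex.I_sq]
    norm_cast
    rw [Real.sq_sqrt] <;> norm_num
  have h := J3_binet_aux (Complex.I * (Real.sqrt 3 : ℂ)) ht n
  linear_combination h
end

section
/- For every integer n ≥ 0, the Binet formula for the third order Jacobsthal–Lucas numbers holds in ℂ: j_n = (8/7)·2^n + ((3 + 2i√3)/7)·ω₁^n + ((3 − 2i√3)/7)·ω₂^n, where ω₁ = (−1 + i√3)/2 and ω₂ = (−1 − i√3)/2 are the two primitive complex cube roots of unity. -/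
theorem j3_binet (n : ℕ) :
    (j3 n : ℂ) =
      (8 / 7) * 2 ^ n
      + ((3 + 2 * Complex.I * (Real.sqrt 3 : ℂ)) / 7) *
          ((-1 + Complex.I * (Real.sqrt 3 : ℂ)) / 2) ^ n
      + ((3 - 2 * Complex.I * (Real.sqrt 3 : ℂ)) / 7) *
          ((-1 - Complex.I * (Real.sqrt 3 : ℂ)) / 2) ^ n := by
  have hs : (Real.sqrt 3 : ℂ) ^ 2 = 3 := by
    rw [← Complex.ofReal_pow, Real.sq_sqrt (by norm_num : (3:ℝ) ≥ 0)]
    norm_num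
  have hI := Complex.I_sq
  set s : ℂ := (Real.sqrt 3 : ℂ)
  have ha : ((-1 + Complex.I * s) / 2) ^ 3
      = ((-1 + Complex.I * s) / 2) ^ 2 + ((-1 + Complex.I * s) / 2) + 2 := by
    linear_combination ((Complex.I * s - 5) / 8) * (s ^ 2 * hI - hs)
  have hb : ((-1 - Complex.I * s) / 2) ^ 3
      = ((-1 - Complex.I * s) / 2) ^ 2 + ((-1 - Complex.I * s) / 2) + 2 := by
    linear_combination ((-(Complex.I * s) - 5) / 8) * (s ^ 2 * hI - hs)
  induction n using j3.induct with
  | case1 => simp [j3]; ring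
  | case2 =>
    show ((j3 1 : ℕ) : ℂ) = _
    rw [show j3 1 = 1 from rfl]
    push_cast
    linear_combination (-2 / 7 : ℂ) * (s ^ 2 * hI - hs)
  | case3 =>
    show ((j3 2 : ℕ) : ℂ) = _
    rw [show j3 2 = 5 from rfl]
    push_cast
    linear_combination (1 / 14 : ℂ) * (s ^ 2 * hI - hs)
  | case4 n ih2 ih1 ih0 =>
    have hrec : (j3 (n + 3) : ℂ) = j3 (n+2) + j3 (n+1) + 2 * j3 n := by
      rw [show j3 (n+3) = j3 (n + 2) + j3 (n + 1) + 2 * j3 n from rfl]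
      push_cast; ring
    have e3 : ∀ x : ℂ, x ^ (n+3) = x ^ n * x ^ 3 := fun x => by ring
    have e2 : ∀ x : ℂ, x ^ (n+2) = x ^ n * x ^ 2 := fun x => by ring
    have e1 : ∀ x : ℂ, x ^ (n+1) = x ^ n * x := fun x => by ring
    rw [hrec, ih2, ih1, ih0]
    rw [e3, e3, e3, e2, e2, e2, e1, e1, e1, ha, hb]
    ring
end

section
/- For every integer n ≥ 3, (j_n)² − 9·(J_n)² = 2^{n+2}·j_{n−3}. -/
lemma j3_add_three_J3 : ∀ n : ℕ, (j3 n : ℤ) + 3 * (J3 n : ℤ) = 2 ^ (n + 1) := by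
  intro n
  induction n using Nat.strong_induction_on with
  | _ n ih =>
    match n with
    | 0 => simp [J3, j3]
    | 1 => norm_num [J3, j3]
    | 2 => norm_num [J3, j3]
    | (m+3) =>
      have h1 := ih m (by omega)
      have h2 := ih (m+1) (by omega)
      have h3 := ih (m+2) (by omega)
      have hJ : J3 (m+3) = J3 (m+2) + J3 (m+1) + 2 * J3 m := rfl
      have hj : j3 (m+3) = j3 (m+2) + j3 (m+1) + 2 * j3 m := rfl
      rw [hJ, hj]
      push_cast
      have : (2:ℤ) ^ (m + 3 + 1) = 2 * 2 ^ (m + 2 + 1) := by ring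
      rw [this]
      have e2 : (2:ℤ) ^ (m + 2 + 1) = 2 * 2 ^ (m + 1 + 1) := by ring
      have e1 : (2:ℤ) ^ (m + 1 + 1) = 2 * 2 ^ (m + 1) := by ring
      linarith [h1, h2, h3, e2, e1]

lemma j3_sub_three_J3 : ∀ n : ℕ, (j3 (n+3) : ℤ) - 3 * (J3 (n+3) : ℤ) = 2 * (j3 n : ℤ) := by
  intro n
  induction n using Nat.strong_induction_on with
  | _ n ih =>
    match n with
    | 0 => norm_num [J3, j3]
    | 1 => norm_num [J3, j3]
    | 2 => norm_num [J3, j3]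
    | (m+3) =>
      have h1 := ih m (by omega)
      have h2 := ih (m+1) (by omega)
      have h3 := ih (m+2) (by omega)
      have hJ : J3 (m+3+3) = J3 (m+2+3) + J3 (m+1+3) + 2 * J3 (m+3) := rfl
      have hj : j3 (m+3+3) = j3 (m+2+3) + j3 (m+1+3) + 2 * j3 (m+3) := rfl
      have hj' : j3 (m+3) = j3 (m+2) + j3 (m+1) + 2 * j3 m := rfl
      rw [hJ, hj, hj']
      push_cast
      push_cast [hj'] at h3 ⊢
      linarith [h1, h2, h3]

theorem j3_sq_sub_nine_J3_sq (n : ℕ) (hn : 3 ≤ n) :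
    (j3 n : ℤ) ^ 2 - 9 * (J3 n : ℤ) ^ 2 = 2 ^ (n + 2) * (j3 (n - 3) : ℤ) := by
  obtain ⟨m, rfl⟩ : ∃ m, n = m + 3 := ⟨n - 3, by omega⟩
  have h1 := j3_add_three_J3 (m + 3)
  have h2 := j3_sub_three_J3 m
  have key : ((j3 (m+3) : ℤ) - 3 * J3 (m+3)) * ((j3 (m+3) : ℤ) + 3 * J3 (m+3))
      = 2 * (j3 m : ℤ) * 2 ^ (m + 3 + 1) := by rw [h1, h2]
  have : m + 3 - 3 = m := by omega
  rw [this]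
  have : (2:ℤ) ^ (m + 3 + 2) = 2 * 2 ^ (m + 3 + 1) := by ring
  rw [this]
  nlinarith [key]
end
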